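/- arXiv:1908.06664 — 2 statements merged into one kernel-verified Lean document; each statement's English description precedes it below -/
import Mathlib

section
/- For the rotational tournament T on 2k'+1 vertices (arcs v_i → v_{i+j} mod 2k'+1 for j = 1,…,k'), every safe set of T has cardinality at least k'+1. -/
variable {V : Type*}

/-- Reachability inside a vertex subset `S` of the digraph with arc relation `A`. -/
def ReachIn (A : V → V → Prop) (S : Set V) : V → V → Prop :=
  Relation.ReflTransGen (fun u v => u ∈ S ∧ v ∈ S ∧ A u v)

/-- The sub-digraph induced on `S` is strongly connected. -/
def StrongIn (A : V → V → Prop) (S : Set V) : Prop :=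
  ∀ u ∈ S, ∀ v ∈ S, ReachIn A S u v

/-- `M` is a strongly connected component of the sub-digraph induced on `S`. -/
def IsSCCIn (A : V → V → Prop) (S M : Set V) : Prop :=
  ∃ v ∈ S, M = {u | u ∈ S ∧ ReachIn A S u v ∧ ReachIn A S v u}

/-- There is an arc from (some vertex of) `M` to (some vertex of) `N`. -/
def HasArc (A : V → V → Prop) (M N : Set V) : Prop :=
  ∃ u ∈ M, ∃ w ∈ N, A u w

/-- `S` is a safe set of the sub-digraph of `A` induced on `H`. -/
def SafeSetIn (A : V → V → Prop) (H S : Set V) : Prop :=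
  S.Nonempty ∧ S ⊆ H ∧
    (∀ M, IsSCCIn A (H \ S) M → ∃ N, IsSCCIn A S N ∧ HasArc A M N) ∧
    (∀ M N, IsSCCIn A (H \ S) M → IsSCCIn A S N → HasArc A M N → M.ncard ≤ N.ncard)

/-- `S` is a safe set of the digraph with arc relation `A`. -/
def SafeSet (A : V → V → Prop) (S : Set V) : Prop :=
  SafeSetIn A Set.univ S

/-- `S` is a strong safe set: a safe set inducing a strongly connected sub-digraph. -/
def StrongSafeSet (A : V → V → Prop) (S : Set V) : Prop :=
  SafeSet A S ∧ StrongIn A S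

/-- A digraph is `k`-strong if it has at least `k+1` vertices and deleting any
fewer than `k` vertices leaves a strongly connected digraph. -/
def KStrong [Fintype V] (A : V → V → Prop) (k : ℕ) : Prop :=
  k + 1 ≤ Fintype.card V ∧ ∀ X : Set V, X.ncard < k → StrongIn A Xᶜ

/-- An oriented graph: no loops and no 2-cycles. -/
def Oriented (A : V → V → Prop) : Prop :=
  ∀ u v, A u v → ¬ A v u

/-- A tournament: no loops, and exactly one arc between any two distinct vertices. -/
def IsTournament (A : V → V → Prop) : Prop :=
  (∀ v, ¬ A v v) ∧ ∀ u v : V, u ≠ v → (A u v ↔ ¬ A v u)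

/-- An acyclic digraph: no arc lies on a directed cycle. -/
def AcyclicDigraph (A : V → V → Prop) : Prop :=
  ∀ u v, A u v → ¬ ReachIn A Set.univ v u

/-- `S` is in-dominating: every vertex outside `S` has an out-neighbour in `S`. -/
def InDominating (A : V → V → Prop) (S : Set V) : Prop :=
  ∀ v, v ∉ S → ∃ w ∈ S, A v w

/-- An independent set of a digraph: no arc between any two of its vertices. -/
def IndepSet (A : V → V → Prop) (I : Set V) : Prop :=
  ∀ u ∈ I, ∀ v ∈ I, u ≠ v → ¬ A u v

noncomputable def outDeg (A : V → V → Prop) (v : V) : ℕ := {w | A v w}.ncard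
noncomputable def inDeg (A : V → V → Prop) (v : V) : ℕ := {w | A w v}.ncard

/-- The safe number: minimum cardinality of a safe set. -/
noncomputable def safeNum (A : V → V → Prop) : ℕ :=
  sInf {n | ∃ S : Set V, SafeSet A S ∧ S.ncard = n}

/-- The strong safe number: minimum cardinality of a strong safe set. -/
noncomputable def strongSafeNum (A : V → V → Prop) : ℕ :=
  sInf {n | ∃ S : Set V, StrongSafeSet A S ∧ S.ncard = n}

/-- The sub-digraph induced on `S` is acyclic. -/
def AcyclicIn (A : V → V → Prop) (S : Set V) : Prop :=
  ∀ u ∈ S, ∀ v ∈ S, A u v → ¬ ReachIn A S v u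

/-!
Let `S` be a safe set of the rotational tournament on `2k + 1` vertices with `|S| ≤ k`.
If some vertex `a` has all its out-neighbours in `S`, then `S = N⁺(a)`, and the vertex
`m = a + k + 1` has `N⁻(m) = N⁺(a) = S` and `N⁺(m) ∩ S = ∅`: so `{m}` is a strong component
of `T - S` with no arc into `S`. Otherwise every vertex has an out-neighbour outside `S`, and
walking forward around the cycle shows that `T - S` is strongly connected; it is then a single
strong component with `2k + 1 - |S| > |S|` vertices, too big to have an arc into `S`.
-/

open Set

section SafeSet

variable {A : V → V → Prop} {S : Set V}

theorem IsSCCIn.subset {H M : Set V} (hM : IsSCCIn A H M) : M ⊆ H := by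
  obtain ⟨v, -, rfl⟩ := hM
  exact fun u hu => hu.1

theorem SafeSet.exists_reachIn_arc_mem (hS : SafeSet A S) {m : V} (hm : m ∉ S) :
    ∃ u ∉ S, ReachIn A (univ \ S) u m ∧ ∃ w ∈ S, A u w := by
  obtain ⟨N, hN, u, ⟨hu, hum, -⟩, w, hw, huw⟩ := hS.2.2.1 _ ⟨m, ⟨mem_univ m, hm⟩, rfl⟩
  exact ⟨u, hu.2, hum, w, hN.subset hw, huw⟩

theorem SafeSet.exists_arc_mem_of_forall_arc_mem (hS : SafeSet A S) {m : V} (hm : m ∉ S)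
    (hin : ∀ u, A u m → u ∈ S) : ∃ w ∈ S, A m w := by
  obtain ⟨u, -, hum, huw⟩ := hS.exists_reachIn_arc_mem hm
  rcases Relation.ReflTransGen.cases_tail hum with rfl | ⟨v, -, hv, -, hvm⟩
  · exact huw
  · exact absurd (hin v hvm) hv.2

theorem SafeSet.ncard_compl_le_of_strongIn [Finite V] (hS : SafeSet A S)
    (hstrong : StrongIn A (univ \ S)) {m : V} (hm : m ∉ S) : (univ \ S).ncard ≤ S.ncard := by
  have hm' : m ∈ univ \ S := ⟨mem_univ m, hm⟩
  set M := {u | u ∈ univ \ S ∧ ReachIn A (univ \ S) u m ∧ ReachIn A (univ \ S) m u}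
  have hM : IsSCCIn A (univ \ S) M := ⟨m, hm', rfl⟩
  have hMeq : M = univ \ S :=
    hM.subset.antisymm fun u hu => ⟨hu, hstrong u hu m hm', hstrong m hm' u hu⟩
  obtain ⟨N, hN, hMN⟩ := hS.2.2.1 M hM
  calc (univ \ S).ncard = M.ncard := by rw [hMeq]
    _ ≤ N.ncard := hS.2.2.2 M N hM hN hMN
    _ ≤ S.ncard := ncard_le_ncard hN.subset

end SafeSet

/-- The circulant digraph on `ℤ/n` with connection set `{1, …, k}`; for `n = 2k + 1` it is the
rotational tournament. -/
def rotationalArc (n k : ℕ) : Fin n → Fin n → Prop :=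
  fun i j => ∃ t : ℕ, 1 ≤ t ∧ t ≤ k ∧ j.val = (i.val + t) % n

section Rotational

variable {n k : ℕ}

theorem rotationalArc_iff (hk : k < n) {i j : Fin n} :
    rotationalArc n k i j ↔ 1 ≤ (j - i).val ∧ (j - i).val ≤ k := by
  have : NeZero n := ⟨by omega⟩
  constructor
  · rintro ⟨t, ht1, htk, hj⟩
    have ht : (j - i).val = t := by
      rw [Fin.val_sub, hj, Nat.add_mod_mod, show n - i.val + (i.val + t) = t + n by omega,
        Nat.add_mod_right, Nat.mod_eq_of_lt (by omega)]
    omega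
  · intro h
    exact ⟨(j - i).val, h.1, h.2, by rw [← Fin.val_add, add_sub_cancel]⟩

theorem ncard_rotationalArc (hk : k < n) (i : Fin n) :
    {j | rotationalArc n k i j}.ncard = k := by
  have : NeZero n := ⟨by omega⟩
  have h : {j | rotationalArc n k i j} = (fun j : Fin n => (j - i).val) ⁻¹' Icc 1 k := by
    ext j
    simp [rotationalArc_iff hk]
  rw [h, ncard_preimage_of_injective_subset_range, ncard_Icc_nat, Nat.add_sub_cancel]
  · exact fun a b hab => sub_left_injective (Fin.ext hab)
  · exact fun x hx => ⟨i + ⟨x, by grind⟩, by simp⟩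

theorem strongIn_compl_of_forall_exists_rotationalArc (hk : k < n) {S : Set (Fin n)}
    (hout : ∀ u, ∃ w, rotationalArc n k u w ∧ w ∉ S) :
    StrongIn (rotationalArc n k) (univ \ S) := by
  have : NeZero n := ⟨by omega⟩
  suffices ∀ d u v, u ∉ S → v ∉ S → (v - u).val = d →
      ReachIn (rotationalArc n k) (univ \ S) u v from
    fun u hu v hv => this _ u v hu.2 hv.2 rfl
  intro d
  induction d using Nat.strong_induction_on with
  | _ d ih =>
  intro u v hu hv hd
  by_cases hdk : d ≤ k
  · rcases Nat.eq_zero_or_pos d with rfl | hd0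
    · rw [sub_eq_zero.mp (Fin.val_eq_zero_iff.mp hd)]
      exact .refl
    · exact .single ⟨⟨mem_univ u, hu⟩, ⟨mem_univ v, hv⟩, (rotationalArc_iff hk).2 (by omega)⟩
  · obtain ⟨w, huw, hw⟩ := hout u
    have ht := (rotationalArc_iff hk).1 huw
    have hvw : (v - w).val = d - (w - u).val := by
      rw [show v - w = (v - u) - (w - u) by abel, Fin.sub_val_of_le (Fin.le_def.2 (by omega)), hd]
    exact .head ⟨⟨mem_univ u, hu⟩, ⟨mem_univ w, hw⟩, huw⟩ (ih _ (by omega) w v hw hv hvw)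

theorem rotationalArc_of_rotationalArc_opposite {a m u : Fin (2 * k + 1)}
    (ham : (m - a).val = k + 1) (hum : rotationalArc (2 * k + 1) k u m) :
    rotationalArc (2 * k + 1) k a u := by
  have hk : k < 2 * k + 1 := by omega
  have h := (rotationalArc_iff hk).1 hum
  have hua : (u - a).val = k + 1 - (m - u).val := by
    rw [show u - a = (m - a) - (m - u) by abel, Fin.sub_val_of_le (Fin.le_def.2 (by omega)), ham]
  exact (rotationalArc_iff hk).2 (by omega)

theorem not_rotationalArc_of_rotationalArc_opposite {a m w : Fin (2 * k + 1)}
    (ham : (m - a).val = k + 1) (hmw : rotationalArc (2 * k + 1) k m w) :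
    ¬ rotationalArc (2 * k + 1) k a w := by
  have hk : k < 2 * k + 1 := by omega
  have h := (rotationalArc_iff hk).1 hmw
  rw [rotationalArc_iff hk, show w - a = (w - m) + (m - a) by abel, Fin.val_add_eq_ite, ham]
  split_ifs <;> omega

end Rotational

theorem stmt14 (k : ℕ) :
    let A : Fin (2 * k + 1) → Fin (2 * k + 1) → Prop := fun i j =>
      ∃ t : ℕ, 1 ≤ t ∧ t ≤ k ∧ j.val = (i.val + t) % (2 * k + 1)
    ∀ S : Set (Fin (2 * k + 1)), SafeSet A S → k + 1 ≤ S.ncard := by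
  intro A S hS
  change SafeSet (rotationalArc (2 * k + 1) k) S at hS
  have hk : k < 2 * k + 1 := by omega
  have hSpos : 0 < S.ncard := (ncard_pos S.toFinite).2 hS.1
  by_contra! hcard
  by_cases hcase : ∃ a, ∀ w, rotationalArc (2 * k + 1) k a w → w ∈ S
  · obtain ⟨a, ha⟩ := hcase
    have hSeq : {w | rotationalArc (2 * k + 1) k a w} = S :=
      eq_of_subset_of_ncard_le ha (by rw [ncard_rotationalArc hk]; omega)
    set m := a + ⟨k + 1, by omega⟩
    have ham : (m - a).val = k + 1 := by simp [m]
    have hmS : m ∉ S := by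
      rw [← hSeq]
      intro hma
      have := (rotationalArc_iff hk).1 hma
      omega
    obtain ⟨w, hw, hmw⟩ := hS.exists_arc_mem_of_forall_arc_mem hmS
      fun u hum => ha u (rotationalArc_of_rotationalArc_opposite ham hum)
    rw [← hSeq] at hw
    exact not_rotationalArc_of_rotationalArc_opposite ham hmw hw
  · push Not at hcase
    obtain ⟨w, -, hw⟩ := hcase 0
    have h := hS.ncard_compl_le_of_strongIn
      (strongIn_compl_of_forall_exists_rotationalArc hk hcase) hw
    rw [ncard_sdiff (subset_univ S), ncard_univ, Nat.card_eq_fintype_card, Fintype.card_fin] at h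
    omega
end

section
/- For n ≥ 3k ≥ 9, every tournament T on n vertices with connectivity k satisfies ss(T) ≤ ⌈n/2⌉. In particular ss_max(T_n^k) ≤ ⌈n/2⌉. -/
variable {V : Type*}

/-!
A strongly connected `S` with `|S| = m = ⌈n/2⌉` into which every outside vertex has an arc
(`InDominating`) is a strong safe set: every strong component of `T - S` sends an arc to `S` and
has at most `n - m ≤ m` vertices.

If some vertex `w` has in-degree above `m`, the in-dominating set `{w} ∪ N⁺(w)` becomes strong
after adding one in-neighbour of `w` reached from `N⁺(w)`, and it still has at most `m` vertices.
Strong sets grow one vertex at a time while keeping a given proper subset: insert an outside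
vertex with arcs from and to the set, or else trade a vertex outside the subset for a two-vertex
ear `U ⇒ r → q ⇒ U`.

Otherwise every in-degree is at most `m`, so the vertex set of an `m`-cycle (strong tournaments
have cycles of every length, by the same insertion argument) fails to be in-dominating only if it
is exactly `N⁻(z)` for some `z`; exchanging two consecutive vertices of the cycle, at most twice,
removes this obstruction.
-/

open Set

section Reachability

variable {A : V → V → Prop}

theorem ReachIn.mono {S S' : Set V} (h : S ⊆ S') {u v : V} (huv : ReachIn A S u v) :
    ReachIn A S' u v :=
  Relation.ReflTransGen.mono (fun _ _ hab => ⟨h hab.1, h hab.2.1, hab.2.2⟩) _ _ huv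

theorem StrongIn.exists_arc_leaving (h : StrongIn A univ) {Y : Set V} {y z : V} (hy : y ∈ Y)
    (hz : z ∉ Y) : ∃ a ∈ Y, ∃ b ∉ Y, A a b := by
  by_contra! hclosed
  have hstay : ∀ c, ReachIn A univ y c → c ∈ Y := fun c hc => by
    induction hc with
    | refl => exact hy
    | tail _ hbc ih => by_contra hc; exact hclosed _ ih _ hc hbc.2.2
  exact hz (hstay z (h y trivial z trivial))

theorem strongIn_of_hub {S : Set V} {c : V} (h : ∀ x ∈ S, ReachIn A S x c ∧ ReachIn A S c x) :
    StrongIn A S :=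
  fun u hu v hv => (h u hu).1.trans (h v hv).2

theorem StrongIn.insert_of_adj {U : Set V} (hU : StrongIn A U) {o a b : V} (ha : a ∈ U) (hb : b ∈ U)
    (hao : A a o) (hob : A o b) : StrongIn A (insert o U) := by
  have hmono : ∀ {x y}, ReachIn A U x y → ReachIn A (insert o U) x y :=
    ReachIn.mono (subset_insert o U)
  refine strongIn_of_hub (c := a) fun x hx => ?_
  rcases hx with rfl | hx
  · exact ⟨.head ⟨mem_insert _ _, .inr hb, hob⟩ (hmono (hU b hb a ha)),
      .single ⟨.inr ha, mem_insert _ _, hao⟩⟩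
  · exact ⟨hmono (hU x hx a ha), hmono (hU a ha x hx)⟩

theorem strongIn_insert_insert {W : Set V} (hW : W.Nonempty) {r q : V} (hr : ∀ u ∈ W, A u r)
    (hrq : A r q) (hq : ∀ u ∈ W, A q u) : StrongIn A (insert r (insert q W)) := by
  obtain ⟨w, hw⟩ := hW
  have hrS : r ∈ insert r (insert q W) := mem_insert _ _
  have hqS : q ∈ insert r (insert q W) := .inr (mem_insert _ _)
  have hWS : ∀ {x}, x ∈ W → x ∈ insert r (insert q W) := fun hx => .inr (.inr hx)
  refine strongIn_of_hub (c := r) fun x hx => ?_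
  rcases hx with rfl | rfl | hx
  · exact ⟨.refl, .refl⟩
  · exact ⟨.head ⟨hqS, hWS hw, hq w hw⟩ (.single ⟨hWS hw, hrS, hr w hw⟩), .single ⟨hrS, hqS, hrq⟩⟩
  · exact ⟨.single ⟨hWS hx, hrS, hr x hx⟩, .head ⟨hrS, hqS, hrq⟩ (.single ⟨hqS, hWS hx, hq x hx⟩)⟩

end Reachability

namespace IsTournament

variable {A : V → V → Prop} (hT : IsTournament A)
include hT

theorem ne_of_adj {u v : V} (h : A u v) : u ≠ v := by
  rintro rfl; exact hT.1 u h

theorem asymm {u v : V} (h : A u v) : ¬ A v u :=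
  (hT.2 u v (hT.ne_of_adj h)).mp h

theorem adj_of_not_adj {u v : V} (hne : u ≠ v) (h : ¬ A u v) : A v u :=
  (hT.2 v u hne.symm).mpr h

theorem exists_reachIn_sink {P : Set V} (hP : P.Finite) (hne : P.Nonempty) :
    ∃ s ∈ P, ∀ x ∈ P, ReachIn A P x s := by
  induction P, hP using Set.Finite.induction_on with
  | empty => exact absurd hne Set.not_nonempty_empty
  | @insert a P ha _ ih =>
    rcases P.eq_empty_or_nonempty with rfl | hP
    · refine ⟨a, mem_insert _ _, fun x hx => ?_⟩
      rw [insert_empty_eq, mem_singleton_iff] at hx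
      exact hx ▸ .refl
    obtain ⟨s, hs, hreach⟩ := ih hP
    have hmono : ∀ {x y}, ReachIn A P x y → ReachIn A (insert a P) x y :=
      ReachIn.mono (subset_insert a P)
    by_cases has : A a s
    · refine ⟨s, .inr hs, fun x hx => ?_⟩
      rcases hx with rfl | hx
      · exact .single ⟨mem_insert _ _, .inr hs, has⟩
      · exact hmono (hreach x hx)
    · have hsa : A s a := hT.adj_of_not_adj (fun h => ha (h ▸ hs)) has
      refine ⟨a, mem_insert _ _, fun x hx => ?_⟩
      rcases hx with rfl | hx
      · exact .refl
      · exact (hmono (hreach x hx)).tail ⟨.inr hs, mem_insert _ _, hsa⟩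

theorem exists_between_or_ear (hstrong : StrongIn A univ) {U : Set V} {u₀ z : V} (hu₀ : u₀ ∈ U)
    (hz : z ∉ U) :
    (∃ o ∉ U, ∃ a ∈ U, ∃ b ∈ U, A a o ∧ A o b) ∨
      ∃ r ∉ U, ∃ q ∉ U, (∀ u ∈ U, A u r) ∧ A r q ∧ ∀ u ∈ U, A q u := by
  by_cases hbetween : ∃ o ∉ U, ∃ a ∈ U, ∃ b ∈ U, A a o ∧ A o b
  · exact .inl hbetween
  push Not at hbetween
  have hsplit : ∀ o ∉ U, (∀ u ∈ U, A u o) ∨ ∀ u ∈ U, A o u := by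
    intro o ho
    by_cases hin : ∃ a ∈ U, A a o
    · obtain ⟨a, ha, hao⟩ := hin
      exact .inl fun u hu => hT.adj_of_not_adj (fun h => ho (h ▸ hu)) (hbetween o ho a ha u hu hao)
    · push Not at hin
      exact .inr fun u hu => hT.adj_of_not_adj (fun h => ho (h ▸ hu)) (hin u hu)
  obtain ⟨q₀, hq₀, b, hb, hq₀b⟩ :=
    hstrong.exists_arc_leaving (Y := Uᶜ) hz (not_not.mpr hu₀)
  have hq₀src : ¬ ∀ u ∈ U, A u q₀ := fun h => hT.asymm hq₀b (h b (not_not.mp hb))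
  -- an arc leaving `U` and the vertices it dominates ends at a vertex dominating `U`
  obtain ⟨r, hr, q, hq, hrq⟩ := hstrong.exists_arc_leaving
    (Y := {x | x ∈ U ∨ ∀ u ∈ U, A u x}) (z := q₀) (.inl hu₀) fun h => h.elim hq₀ hq₀src
  simp only [mem_ofPred_eq, not_or] at hr hq
  have hqU : ∀ u ∈ U, A q u := (hsplit q hq.1).resolve_left hq.2
  have hrU : r ∉ U := fun h => hT.asymm hrq (hqU r h)
  exact .inr ⟨r, hrU, q, hq.1, hr.resolve_left hrU, hrq, hqU⟩

end IsTournament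

section Domination

variable {A : V → V → Prop}

theorem IsTournament.inDeg_add_outDeg [Finite V] (hT : IsTournament A) (v : V) :
    inDeg A v + outDeg A v + 1 = Nat.card V := by
  have hunion : {x | A x v} ∪ {x | A v x} = {v}ᶜ := by
    ext x
    simp only [mem_union, mem_ofPred_eq, mem_compl_singleton_iff]
    refine ⟨fun h => ?_, fun hne => or_iff_not_imp_left.mpr (hT.adj_of_not_adj hne)⟩
    rintro rfl
    exact h.elim (hT.1 x) (hT.1 x)
  have hdisj : Disjoint {x | A x v} {x | A v x} :=
    disjoint_left.mpr fun _ hxv hvx => hT.asymm hxv hvx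
  rw [inDeg, outDeg, ← ncard_union_eq hdisj, hunion, ← ncard_add_ncard_compl {v}, ncard_singleton,
    add_comm]

theorem InDominating.mono {E S : Set V} (hE : InDominating A E) (hES : E ⊆ S) :
    InDominating A S := fun v hv =>
  let ⟨w, hw, hvw⟩ := hE v fun h => hv (hES h)
  ⟨w, hES hw, hvw⟩

theorem IsTournament.inDominating_insert_outNbhd (hT : IsTournament A) (w : V) :
    InDominating A (insert w {x | A w x}) := fun _ hv =>
  ⟨w, mem_insert _ _, hT.adj_of_not_adj (fun h => hv (h ▸ mem_insert _ _)) fun h => hv (.inr h)⟩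

theorem IsTournament.inDominating_of_inDeg_le [Finite V] (hT : IsTournament A) {S : Set V}
    (hdeg : ∀ v, inDeg A v ≤ S.ncard) (hS : ∀ z ∉ S, {x | A x z} ≠ S) : InDominating A S := by
  intro v hv
  by_contra! hno
  have hsub : S ⊆ {x | A x v} := fun s hs => hT.adj_of_not_adj (fun h => hv (h ▸ hs)) (hno s hs)
  exact hS v hv (eq_of_subset_of_ncard_le hsub (hdeg v)).symm

theorem IsTournament.notMem_of_inNbhd_eq (hT : IsTournament A) {S : Set V} {z : V}
    (hz : {x | A x z} = S) : z ∉ S :=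
  fun h => hT.1 z (hz.symm ▸ h : z ∈ {x | A x z})

theorem IsTournament.adj_of_inNbhd_eq (hT : IsTournament A) {S : Set V} {z u : V}
    (hz : {x | A x z} = S) (hu : u ∉ S) (hne : u ≠ z) : A z u :=
  hT.adj_of_not_adj hne fun h => hu (hz ▸ h)

theorem StrongIn.isSCCIn_iff {S N : Set V} (hS : StrongIn A S) (hne : S.Nonempty) :
    IsSCCIn A S N ↔ N = S := by
  have hself : ∀ v ∈ S, {u | u ∈ S ∧ ReachIn A S u v ∧ ReachIn A S v u} = S := fun v hv =>
    Subset.antisymm (fun _ hu => hu.1) fun u hu => ⟨hu, hS u hu v hv, hS v hv u hu⟩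
  constructor
  · rintro ⟨v, hv, rfl⟩
    exact hself v hv
  · rintro rfl
    exact ⟨hne.some, hne.some_mem, (hself _ hne.some_mem).symm⟩

theorem StrongIn.strongSafeSet [Finite V] {S : Set V} (hS : StrongIn A S) (hne : S.Nonempty)
    (hdom : InDominating A S) (hcard : Sᶜ.ncard ≤ S.ncard) : StrongSafeSet A S := by
  refine ⟨⟨hne, subset_univ S, fun M hM => ?_, fun M N hM hN _ => ?_⟩, hS⟩
  · obtain ⟨v, hv, rfl⟩ := hM
    obtain ⟨s, hs, hvs⟩ := hdom v hv.2
    exact ⟨S, (hS.isSCCIn_iff hne).mpr rfl, v, ⟨hv, .refl, .refl⟩, s, hs, hvs⟩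
  · obtain ⟨_, -, rfl⟩ := hM
    rw [(hS.isSCCIn_iff hne).mp hN]
    refine le_trans (ncard_le_ncard fun u hu => ?_) hcard
    exact hu.1.2

end Domination

namespace IsTournament

variable {A : V → V → Prop} [Finite V] (hT : IsTournament A) (hstrong : StrongIn A univ)
include hT hstrong

theorem exists_strongIn_ncard_succ {U E : Set V} (hU : StrongIn A U) (hEU : E ⊂ U)
    (hE : E.Nonempty) {z : V} (hz : z ∉ U) :
    ∃ U', StrongIn A U' ∧ E ⊂ U' ∧ U'.ncard = U.ncard + 1 := by
  obtain ⟨e, he⟩ := hE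
  rcases hT.exists_between_or_ear hstrong (hEU.subset he) hz with
    ⟨o, ho, a, ha, b, hb, hao, hob⟩ | ⟨r, hr, q, hq, hUr, hrq, hqU⟩
  · exact ⟨insert o U, hU.insert_of_adj ha hb hao hob, hEU.trans_subset (subset_insert o U),
      ncard_insert_of_notMem ho⟩
  -- no vertex can be inserted: trade a vertex `x ∉ E` for the two-vertex ear `r → q`
  obtain ⟨x, hxU, hxE⟩ := exists_of_ssubset hEU
  have hEW : E ⊆ U \ {x} := fun y hy => ⟨hEU.subset hy, fun h => hxE (h ▸ hy)⟩
  refine ⟨insert r (insert q (U \ {x})), strongIn_insert_insert ⟨e, hEW he⟩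
    (fun u hu => hUr u hu.1) hrq (fun u hu => hqU u hu.1), ?_, ?_⟩
  · exact ssubset_iff_of_subset ((hEW.trans (subset_insert _ _)).trans (subset_insert _ _)) |>.mpr
      ⟨r, mem_insert _ _, fun h => hr (hEU.subset h)⟩
  · have hrq' : r ≠ q := hT.ne_of_adj hrq
    rw [ncard_insert_of_notMem (by simp [hrq', hr]), ncard_insert_of_notMem (by simp [hq]),
      ncard_sdiff_singleton_of_mem hxU]
    have := (ncard_pos (toFinite U)).mpr ⟨x, hxU⟩
    omega

theorem exists_strongIn_superset_ncard_eq {U E : Set V} (hU : StrongIn A U) (hEU : E ⊂ U)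
    (hE : E.Nonempty) {m : ℕ} (hUm : U.ncard ≤ m) (hm : m ≤ Nat.card V) :
    ∃ S, StrongIn A S ∧ E ⊆ S ∧ S.ncard = m := by
  suffices ∃ S, StrongIn A S ∧ E ⊂ S ∧ S.ncard = m from
    let ⟨S, hS, hES, hcard⟩ := this; ⟨S, hS, hES.subset, hcard⟩
  induction m, hUm using Nat.le_induction with
  | base => exact ⟨U, hU, hEU, rfl⟩
  | succ m _ ih =>
    obtain ⟨S, hS, hES, rfl⟩ := ih (by omega)
    obtain ⟨z, hz⟩ : ∃ z, z ∉ S := by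
      by_contra! h
      rw [eq_univ_of_forall h, ncard_univ] at hm
      omega
    exact hT.exists_strongIn_ncard_succ hstrong hS hES hE hz

theorem exists_strongIn_insert_insert_outNbhd [Nontrivial V] (w : V) :
    ∃ g, A g w ∧ StrongIn A (insert w (insert g {x | A w x})) := by
  set P := {x | A w x}
  have hP : P.Nonempty := by
    obtain ⟨z, hz⟩ := exists_ne w
    obtain ⟨_, rfl, b, hb, hwb⟩ := hstrong.exists_arc_leaving (Y := {w}) rfl hz
    exact ⟨b, hwb⟩
  obtain ⟨s, hsP, hsink⟩ := hT.exists_reachIn_sink (toFinite P) hP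
  -- leave the part of `P` reachable from its sink `s`; the exit lands in an in-neighbour `g` of `w`
  obtain ⟨y, ⟨hyP, hsy⟩, g, hg, hyg⟩ := hstrong.exists_arc_leaving
    (Y := {p | p ∈ P ∧ ReachIn A P s p}) (z := w) ⟨hsP, .refl⟩ fun h => hT.1 w h.1
  have hgP : g ∉ P := fun h => hg ⟨h, hsy.tail ⟨hyP, h, hyg⟩⟩
  have hgw : A g w := hT.adj_of_not_adj (fun h => hT.asymm hyP (h ▸ hyg)) hgP
  refine ⟨g, hgw, strongIn_of_hub (c := w) fun x hx => ?_⟩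
  set U := insert w (insert g P)
  have hPU : P ⊆ U := (subset_insert _ _).trans (subset_insert _ _)
  have hwU : w ∈ U := mem_insert _ _
  have hgU : g ∈ U := .inr (mem_insert _ _)
  have htoG : ∀ p ∈ P, ReachIn A U p g := fun p hp =>
    (ReachIn.mono hPU ((hsink p hp).trans hsy)).tail ⟨hPU hyP, hgU, hyg⟩
  rcases hx with rfl | rfl | hx
  · exact ⟨.refl, .refl⟩
  · exact ⟨.single ⟨hgU, hwU, hgw⟩, .head ⟨hwU, hPU hsP, hsP⟩ (htoG s hsP)⟩
  · exact ⟨(htoG x hx).tail ⟨hgU, hwU, hgw⟩, .single ⟨hwU, hPU hx, hx⟩⟩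

theorem exists_strongIn_inDominating_of_outDeg_add_two_le {w : V} {m : ℕ}
    (hwm : outDeg A w + 2 ≤ m) (hm : m ≤ Nat.card V) :
    ∃ S, StrongIn A S ∧ InDominating A S ∧ S.ncard = m := by
  have : Nontrivial V := Finite.one_lt_card_iff_nontrivial.mp (by omega)
  obtain ⟨g, hgw, hU⟩ := hT.exists_strongIn_insert_insert_outNbhd hstrong w
  have hgP : g ∉ {x | A w x} := hT.asymm hgw
  have hgw' : g ≠ w := hT.ne_of_adj hgw
  have hEU : insert w {x | A w x} ⊂ insert w (insert g {x | A w x}) :=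
    ssubset_iff_of_subset (insert_subset_insert (subset_insert _ _)) |>.mpr
      ⟨g, .inr (mem_insert _ _), by simp [hgw', hgP]⟩
  have hcard : (insert w (insert g {x | A w x})).ncard = outDeg A w + 2 := by
    rw [ncard_insert_of_notMem (by simp [hgw'.symm, hT.1 w]), ncard_insert_of_notMem hgP, outDeg]
  obtain ⟨S, hS, hES, rfl⟩ := hT.exists_strongIn_superset_ncard_eq hstrong hU hEU
    ⟨w, mem_insert _ _⟩ (by omega) hm
  exact ⟨S, hS, (hT.inDominating_insert_outNbhd w).mono hES, rfl⟩

end IsTournament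

structure IsDirCycle (A : V → V → Prop) (s : Cycle V) : Prop where
  nodup : s.Nodup
  chain : s.Chain A

theorem Cycle.exists_eq_coe_cons {α : Type*} {s : Cycle α} {a : α} (ha : a ∈ s) :
    ∃ t : List α, s = ↑(a :: t) := by
  induction s using Quotient.inductionOn' with
  | h l =>
    obtain ⟨p, q, rfl⟩ := List.append_of_mem (Cycle.mem_coe_iff.mp ha)
    exact ⟨q ++ p, Cycle.coe_eq_coe.mpr List.isRotated_append⟩

theorem List.exists_eq_append_cons_cons_of_mem {α : Type*} {P : α → Prop} {a b : α} {l : List α}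
    (ha : P a) (hb : b ∈ a :: l) (hPb : ¬ P b) :
    ∃ p u v q, a :: l = p ++ u :: v :: q ∧ P u ∧ ¬ P v := by
  by_contra! h
  have hchain : (a :: l).IsChain fun u v => P u → P v :=
    isChain_iff_forall_rel_of_append_cons_cons.mpr fun _ _ _ _ heq => h _ _ _ _ heq
  exact hPb (hchain.induction P _ (fun _ _ h => h) (fun _ => ha) b hb)

theorem Cycle.exists_eq_coe_cons_getLast {α : Type*} {s : Cycle α} {P : α → Prop} {a b : α}
    (ha : a ∈ s) (hPa : P a) (hb : b ∈ s) (hPb : ¬ P b) :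
    ∃ v t, s = ↑(v :: t) ∧ P ((v :: t).getLast (List.cons_ne_nil v t)) ∧ ¬ P v := by
  obtain ⟨t₀, rfl⟩ := Cycle.exists_eq_coe_cons ha
  obtain ⟨p, u, v, q, heq, hu, hv⟩ :=
    List.exists_eq_append_cons_cons_of_mem hPa (Cycle.mem_coe_iff.mp hb) hPb
  refine ⟨v, q ++ p ++ [u], ?_, by simpa using hu, hv⟩
  rw [heq, Cycle.coe_eq_coe]
  simpa using (List.isRotated_append (l := p ++ [u]) (l' := v :: q))

theorem Cycle.exists_eq_coe_cons_cons_cons {α : Type*} {s : Cycle α} {b : α} (hb : b ∈ s)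
    (h3 : 3 ≤ s.length) : ∃ d₁ d₂ t, s = ↑(d₁ :: d₂ :: b :: t) := by
  obtain ⟨t₀, rfl⟩ := Cycle.exists_eq_coe_cons hb
  rcases t₀.eq_nil_or_concat with rfl | ⟨t₁, d₂, rfl⟩
  · simp at h3
  rcases t₁.eq_nil_or_concat with rfl | ⟨t, d₁, rfl⟩
  · simp at h3
  refine ⟨d₁, d₂, t, Cycle.coe_eq_coe.mpr ?_⟩
  simpa using List.isRotated_append (l := b :: t) (l' := [d₁, d₂])

theorem List.IsChain.reachIn_head {A : V → V → Prop} {a : V} {l : List V}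
    (h : (a :: l).IsChain A) {S : Set V} (hS : ∀ x ∈ a :: l, x ∈ S) :
    ∀ x ∈ a :: l, ReachIn A S a x :=
  (List.IsChain.iff_mem.mp h).induction (ReachIn A S a) _
    (fun x y hxy hx => hx.tail ⟨hS x hxy.1, hS y hxy.2.1, hxy.2.2⟩) fun _ => .refl

namespace IsDirCycle

variable {A : V → V → Prop}

theorem of_isChain {a : V} {t : List V} (hnd : (a :: t).Nodup) (hch : (a :: t).IsChain A)
    (hclose : A ((a :: t).getLast (List.cons_ne_nil a t)) a) : IsDirCycle A ↑(a :: t) :=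
  ⟨Cycle.nodup_coe_iff.mpr hnd,
    (Cycle.chain_coe_cons _ _ _).mpr <| hch.append (.singleton a) <| by
      simpa [List.getLast?_eq_some_getLast (List.cons_ne_nil a t)] using hclose⟩

theorem isChain_and_nodup_of_eq_append {p l : List V} {b : V} (hs : IsDirCycle A ↑(p ++ b :: l)) :
    (b :: l).IsChain A ∧ (b :: l).Nodup := by
  have hrot : (↑(p ++ b :: l) : Cycle V) = ↑(b :: (l ++ p)) :=
    Cycle.coe_eq_coe.mpr (by simpa using List.isRotated_append (l := p) (l' := b :: l))
  obtain ⟨hnd, hch⟩ := hs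
  rw [hrot, Cycle.nodup_coe_iff] at hnd
  rw [hrot, Cycle.chain_coe_cons] at hch
  exact ⟨hch.prefix ⟨p ++ [b], by simp⟩, hnd.sublist (by simp)⟩

theorem strongIn {s : Cycle V} (hs : IsDirCycle A s) : StrongIn A {x | x ∈ s} := by
  intro u hu v hv
  obtain ⟨t, rfl⟩ := Cycle.exists_eq_coe_cons hu
  have hch : (u :: (t ++ [u])).IsChain A := (Cycle.chain_coe_cons _ _ _).mp hs.chain
  have hmem : ∀ x, x ∈ u :: (t ++ [u]) ↔ x ∈ (↑(u :: t) : Cycle V) := fun x => by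
    simp only [Cycle.mem_coe_iff, List.mem_cons, List.mem_append]
    tauto
  exact hch.reachIn_head (fun x hx => (hmem x).mp hx) v ((hmem v).mpr hv)

theorem ncard_eq {s : Cycle V} (hs : IsDirCycle A s) : {x | x ∈ s}.ncard = s.length := by
  classical
  induction s using Quot.inductionOn with
  | _ l =>
    rw [Cycle.mk_eq_coe] at hs ⊢
    have hset : {x | x ∈ (l : Cycle V)} = ↑l.toFinset := by ext; simp [Cycle.mem_coe_iff]
    rw [hset, ncard_coe_finset, List.toFinset_card_of_nodup (Cycle.nodup_coe_iff.mp hs.nodup)]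
    rfl

theorem replace_prefix {p l : List V} {b x y : V} (hs : IsDirCycle A ↑(p ++ b :: l))
    (hx : x ∉ b :: l) (hy : y ∉ b :: l) (hxy : x ≠ y) (hlx : A ((b :: l).getLast (by simp)) x)
    (hAxy : A x y) (hyb : A y b) : IsDirCycle A ↑(x :: y :: b :: l) := by
  obtain ⟨hch, hnd⟩ := hs.isChain_and_nodup_of_eq_append
  exact of_isChain (by simp_all) (.cons_cons hAxy (.cons_cons hyb hch)) (by simpa using hlx)

end IsDirCycle

namespace IsTournament

variable {A : V → V → Prop} (hT : IsTournament A) (hstrong : StrongIn A univ)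
include hT hstrong

theorem exists_isDirCycle_length_succ {s : Cycle V} (hs : IsDirCycle A s) {a : V} (ha : a ∈ s)
    (hlt : s.length < Nat.card V) : ∃ s', IsDirCycle A s' ∧ s'.length = s.length + 1 := by
  obtain ⟨z, hz⟩ : ∃ z, z ∉ s := by
    by_contra! h
    rw [← hs.ncard_eq, show {x | x ∈ s} = univ from eq_univ_of_forall h, ncard_univ] at hlt
    exact lt_irrefl _ hlt
  rcases hT.exists_between_or_ear hstrong (U := {x | x ∈ s}) ha hz with
    ⟨o, ho, b, hb, c, hc, hbo, hoc⟩ | ⟨r, hr, q, hq, hsr, hrq, hqs⟩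
  · obtain ⟨v, t, rfl, hlast, hv⟩ :=
      Cycle.exists_eq_coe_cons_getLast (P := (A · o)) hb hbo hc (hT.asymm hoc)
    have hov : A o v := hT.adj_of_not_adj (fun h => ho (h ▸ by simp [Cycle.mem_coe_iff])) hv
    obtain ⟨hch, hnd⟩ := hs.isChain_and_nodup_of_eq_append (p := [])
    refine ⟨↑(o :: v :: t), .of_isChain ?_ (.cons_cons hov hch) (by simpa using hlast), by simp⟩
    exact List.nodup_cons.mpr ⟨fun h => ho (Cycle.mem_coe_iff.mpr h), hnd⟩
  · obtain ⟨_ | ⟨y, t⟩, rfl⟩ := Cycle.exists_eq_coe_cons ha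
    · exact absurd (Cycle.chain_singleton A a |>.mp hs.chain) (hT.1 a)
    have hmem : ∀ {x}, x ∈ y :: t → x ∈ ({x | x ∈ (↑(a :: y :: t) : Cycle V)} : Set V) :=
      fun h => Cycle.mem_coe_iff.mpr (List.mem_cons_of_mem a h)
    exact ⟨↑(r :: q :: y :: t), hs.replace_prefix (p := [a]) (mt hmem hr) (mt hmem hq)
      (hT.ne_of_adj hrq) (hsr _ (hmem (List.getLast_mem _))) hrq (hqs _ (hmem (by simp))),
      by simp⟩

theorem exists_isDirCycle_length [Finite V] {m : ℕ} (hm3 : 3 ≤ m) (hm : m ≤ Nat.card V) :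
    ∃ s, IsDirCycle A s ∧ s.length = m := by
  induction m, hm3 using Nat.le_induction with
  | base =>
    have : Nontrivial V := Finite.one_lt_card_iff_nontrivial.mp (by omega)
    obtain ⟨v⟩ := (inferInstance : Nonempty V)
    obtain ⟨z, hz⟩ := exists_ne v
    rcases hT.exists_between_or_ear hstrong (U := {v}) rfl hz with
      ⟨o, -, _, rfl, _, rfl, hvo, hov⟩ | ⟨r, hr, q, hq, hvr, hrq, hqv⟩
    · exact absurd hov (hT.asymm hvo)
    have hvr' := hvr v rfl
    have hqv' := hqv v rfl
    refine ⟨↑[v, r, q], .of_isChain ?_ (.cons_cons hvr' (.cons_cons hrq (.singleton q))) hqv', rfl⟩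
    simp [hT.ne_of_adj hvr', hT.ne_of_adj hrq, (hT.ne_of_adj hqv').symm]
  | succ m _ ih =>
    obtain ⟨s, hs, rfl⟩ := ih (by omega)
    obtain ⟨a, ha⟩ := nonempty_of_ncard_ne_zero (s := {x | x ∈ s}) (by rw [hs.ncard_eq]; omega)
    exact hT.exists_isDirCycle_length_succ hstrong hs ha (by omega)

end IsTournament

namespace IsTournament

variable {A : V → V → Prop} (hT : IsTournament A)
include hT

/-- A vertex `z` with `N⁻(z) = {z₁, d₂, b, …}` is beaten by `z₁`, so it lies outside the old cycle
and is beaten by `z₀`, which would put `z₀` into `N⁻(z)`. -/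
theorem forall_inNbhd_ne_of_swap {d₁ d₂ b z₀ z₁ : V} {t : List V} (hd₁d₂ : A d₁ d₂)
    (hz₀ : {x | A x z₀} = {x | x ∈ d₁ :: d₂ :: b :: t}) (hz₀z₁ : A z₀ z₁) :
    ∀ z, {x | A x z} ≠ {x | x ∈ z₁ :: d₂ :: b :: t} := by
  intro z₂ hz₂
  have hz₂' : ∀ x, A x z₂ ↔ x ∈ z₁ :: d₂ :: b :: t := fun x => Set.ext_iff.mp hz₂ x
  have hz₁z₂ : A z₁ z₂ := (hz₂' z₁).mpr (.head _)
  have hz₂s₀ : z₂ ∉ {x | x ∈ d₁ :: d₂ :: b :: t} := by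
    rintro (_ | ⟨_, h⟩)
    · exact hT.asymm hd₁d₂ ((hz₂' d₂).mpr (.tail _ (.head _)))
    · exact hT.1 z₂ ((hz₂' z₂).mpr (.tail _ h))
  have hz₂z₀ : z₂ ≠ z₀ := by rintro rfl; exact hT.asymm hz₀z₁ hz₁z₂
  rcases (hz₂' z₀).mp (hT.adj_of_inNbhd_eq hz₀ hz₂s₀ hz₂z₀) with _ | ⟨_, h⟩
  · exact hT.1 _ hz₀z₁
  · exact hT.notMem_of_inNbhd_eq hz₀ (.tail _ h)

/-- Exchange `d₁ d₂` for `z₀ y`; if the new cycle is `N⁻(z₁)`, exchange `d₁ d₂` for `z₁ d₂`. -/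
theorem exists_isDirCycle_forall_inNbhd_ne_of_swap {d₁ d₂ b y z₀ : V} {t : List V}
    (hs₀ : IsDirCycle A ↑(d₁ :: d₂ :: b :: t)) (hz₀ : {x | A x z₀} = {x | x ∈ d₁ :: d₂ :: b :: t})
    (hy : y ∉ d₁ :: d₂ :: b :: t) (hyz₀ : y ≠ z₀) (hyb : A y b) :
    ∃ s, IsDirCycle A s ∧ s.length = t.length + 3 ∧ ∀ z, {x | A x z} ≠ {x | x ∈ s} := by
  have hz₀s₀ : z₀ ∉ d₁ :: d₂ :: b :: t := hT.notMem_of_inNbhd_eq hz₀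
  obtain ⟨hch₀, hnd₀⟩ := hs₀.isChain_and_nodup_of_eq_append (p := [])
  have hW : ∀ {x}, x ∈ b :: t → x ∈ d₁ :: d₂ :: b :: t := fun h => .tail _ (.tail _ h)
  have hlast : (b :: t).getLast (List.cons_ne_nil b t) ∈ b :: t := List.getLast_mem _
  have hs₁ : IsDirCycle A ↑(z₀ :: y :: b :: t) :=
    hs₀.replace_prefix (p := [d₁, d₂]) (mt hW hz₀s₀) (mt hW hy) hyz₀.symm
      ((Set.ext_iff.mp hz₀ _).mpr (hW hlast)) (hT.adj_of_inNbhd_eq hz₀ hy hyz₀) hyb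
  by_cases h₁ : ∀ z, {x | A x z} ≠ {x | x ∈ z₀ :: y :: b :: t}
  · exact ⟨_, hs₁, by simp, h₁⟩
  push Not at h₁
  obtain ⟨z₁, hz₁⟩ := h₁
  have hz₁' : ∀ x, A x z₁ ↔ x ∈ z₀ :: y :: b :: t := fun x => Set.ext_iff.mp hz₁ x
  have hd₂b : A d₂ b := hch₀.tail.rel
  have hd₂W : d₂ ∉ b :: t := (List.nodup_cons.mp (List.nodup_cons.mp hnd₀).2).1
  have hd₂s₁ : d₂ ∉ {x | x ∈ z₀ :: y :: b :: t} := by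
    have hd₂s₀ : d₂ ∈ d₁ :: d₂ :: b :: t := .tail _ (.head _)
    rintro (_ | ⟨_, _ | ⟨_, h⟩⟩)
    · exact hz₀s₀ hd₂s₀
    · exact hy hd₂s₀
    · exact hd₂W h
  have hz₁d₂ : z₁ ≠ d₂ := by
    rintro rfl
    exact hT.asymm hd₂b ((hz₁' b).mpr (.tail _ (.tail _ (.head _))))
  have hs₂ : IsDirCycle A ↑(z₁ :: d₂ :: b :: t) :=
    hs₀.replace_prefix (p := [d₁, d₂])
      (fun h => hT.notMem_of_inNbhd_eq hz₁ (.tail _ (.tail _ h))) hd₂W hz₁d₂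
      ((hz₁' _).mpr (.tail _ (.tail _ hlast))) (hT.adj_of_inNbhd_eq hz₁ hd₂s₁ hz₁d₂.symm) hd₂b
  exact ⟨_, hs₂, by simp, hT.forall_inNbhd_ne_of_swap hch₀.rel hz₀ ((hz₁' z₀).mpr (.head _))⟩

theorem exists_strongIn_inDominating_of_inDeg_le [Finite V] (hstrong : StrongIn A univ) {m : ℕ}
    (hm3 : 3 ≤ m) (hm : m ≤ Nat.card V) (hdeg : ∀ v, inDeg A v ≤ m) :
    ∃ S, StrongIn A S ∧ InDominating A S ∧ S.ncard = m := by
  obtain ⟨s₀, hs₀, rfl⟩ := hT.exists_isDirCycle_length hstrong hm3 hm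
  obtain ⟨s, hs, hlen, hgood⟩ :
      ∃ s, IsDirCycle A s ∧ s.length = s₀.length ∧ ∀ z, {x | A x z} ≠ {x | x ∈ s} := by
    by_cases h₀ : ∀ z, {x | A x z} ≠ {x | x ∈ s₀}
    · exact ⟨s₀, hs₀, rfl, h₀⟩
    push Not at h₀
    obtain ⟨z₀, hz₀⟩ := h₀
    have hz₀s₀ := hT.notMem_of_inNbhd_eq hz₀
    obtain ⟨a, ha⟩ := nonempty_of_ncard_ne_zero (s := {x | x ∈ s₀}) (by rw [hs₀.ncard_eq]; omega)
    obtain ⟨y, hy, b, hb, hyb⟩ :=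
      hstrong.exists_arc_leaving (Y := {x | x ∈ s₀}ᶜ) hz₀s₀ (not_not.mpr ha)
    rw [notMem_compl_iff] at hb
    have hyz₀ : y ≠ z₀ := by rintro rfl; exact hT.asymm hyb ((Set.ext_iff.mp hz₀ b).mpr hb)
    obtain ⟨d₁, d₂, t, rfl⟩ := Cycle.exists_eq_coe_cons_cons_cons hb hm3
    obtain ⟨s, hs, hlen, hgood⟩ := hT.exists_isDirCycle_forall_inNbhd_ne_of_swap hs₀ hz₀ hy hyz₀ hyb
    exact ⟨s, hs, by simp [hlen], hgood⟩
  rw [← hlen, ← hs.ncard_eq] at hdeg ⊢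
  exact ⟨_, hs.strongIn, hT.inDominating_of_inDeg_le hdeg fun z _ => hgood z, rfl⟩

end IsTournament

theorem stmt15_general [Fintype V] (A : V → V → Prop) (n k : ℕ)
    (hcard : Fintype.card V = n) (hk : 3 ≤ k) (hn : 3 * k ≤ n)
    (hT : IsTournament A) (h1 : KStrong A k) :
    ∃ S : Set V, StrongSafeSet A S ∧ S.ncard ≤ (n + 1) / 2 := by
  have hstrong : StrongIn A univ := by simpa using h1.2 ∅ (by rw [ncard_empty]; omega)
  have hV : Nat.card V = n := by rw [Nat.card_eq_fintype_card, hcard]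
  obtain ⟨S, hS, hdom, hSm⟩ : ∃ S, StrongIn A S ∧ InDominating A S ∧ S.ncard = (n + 1) / 2 := by
    by_cases hbig : ∃ w, (n + 1) / 2 + 1 ≤ inDeg A w
    · obtain ⟨w, hw⟩ := hbig
      have := hT.inDeg_add_outDeg w
      exact hT.exists_strongIn_inDominating_of_outDeg_add_two_le hstrong (w := w) (by omega)
        (by omega)
    · push Not at hbig
      exact hT.exists_strongIn_inDominating_of_inDeg_le hstrong (by omega) (by omega)
        fun v => Nat.le_of_lt_succ (hbig v)
  refine ⟨S, hS.strongSafeSet (nonempty_of_ncard_ne_zero (by omega)) hdom ?_, hSm.le⟩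
  rw [ncard_compl S, hV]
  omega

theorem stmt15 [Fintype V] (A : V → V → Prop) (n k : ℕ)
    (hcard : Fintype.card V = n) (hk : 3 ≤ k) (hn : 3 * k ≤ n)
    (hT : IsTournament A) (h1 : KStrong A k) (h2 : ¬ KStrong A (k + 1)) :
    ∃ S : Set V, StrongSafeSet A S ∧ S.ncard ≤ (n + 1) / 2 :=
  stmt15_general A n k hcard hk hn hT h1
end
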